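/- Let A be a real symmetric 3×3 matrix with trace zero. If -∑_i A_{ii}² + 6∑_{i<j} A_{ii}A_{jj} - 8∑_{i<j} A_{ij}² ≥ 0, then A = 0. -/
import Mathlib


/-- A real symmetric 3×3 matrix with trace zero satisfying
`-∑ᵢ Aᵢᵢ² + 6∑_{i<j} Aᵢᵢ Aⱼⱼ - 8∑_{i<j} Aᵢⱼ² ≥ 0` must vanish. -/
theorem stmt_0 (A : Matrix (Fin 3) (Fin 3) ℝ) (hA : A.IsSymm) (htr : A.trace = 0)
    (h : -(∑ i, (A i i) ^ 2)
        + 6 * (A 0 0 * A 1 1 + A 0 0 * A 2 2 + A 1 1 * A 2 2)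
        - 8 * ((A 0 1) ^ 2 + (A 0 2) ^ 2 + (A 1 2) ^ 2) ≥ 0) :
    A = 0 := by
  have ht : A 0 0 + A 1 1 + A 2 2 = 0 := by
    simpa [Matrix.trace, Matrix.diag, Fin.sum_univ_three] using htr
  rw [Fin.sum_univ_three] at h
  have h00 : A 0 0 = 0 := by nlinarith [sq_nonneg (A 0 1), sq_nonneg (A 0 2), sq_nonneg (A 1 2), sq_nonneg (A 1 1 - A 2 2)]
  have h11 : A 1 1 = 0 := by nlinarith [sq_nonneg (A 0 1), sq_nonneg (A 0 2), sq_nonneg (A 1 2), sq_nonneg (A 0 0 - A 2 2)]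
  have h22 : A 2 2 = 0 := by linarith
  have h01 : A 0 1 = 0 := by nlinarith [sq_nonneg (A 0 2), sq_nonneg (A 1 2)]
  have h02 : A 0 2 = 0 := by nlinarith [sq_nonneg (A 1 2)]
  have h12 : A 1 2 = 0 := by nlinarith
  have hs : ∀ i j, A j i = A i j := fun i j => hA.apply i j
  ext i j
  fin_cases i <;> fin_cases j <;>
    simp_all [hs 0 1, hs 0 2, hs 1 2]
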